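/- arXiv:2509.20790 — 2 statements merged into one kernel-verified Lean document; each statement's English description precedes it below -/
import Mathlib

section
/- Let M = ⟨S, g⟩ be a stochastic finite-action mechanism, z ∈ Z, and u a cardinal state such that u_i(z) ≥ u_i(z̃) for every i ∈ I and every z̃ ∈ Z (z is a weakly top-ranked outcome of every agent at u). Then S_i^z ⊆ UD_i^k(M, u) for every i ∈ I and every k ≥ 1; in particular, ×_{i∈I} S_i^z ⊆ UD^∞(M, u). -/
open Function

noncomputable section

/-- A lottery (probability distribution) on the finite outcome set `Z`. -/
def Lottery (Z : Type) [Fintype Z] : Type :=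
  {y : Z → ℝ // (∀ z, 0 ≤ y z) ∧ ∑ z, y z = 1}

variable {Z : Type} [Fintype Z]

/-- The degenerate lottery on the outcome `z`. -/
def Lottery.delta [DecidableEq Z] (z : Z) : Lottery Z :=
  ⟨fun z' => if z' = z then 1 else 0, fun z' => by positivity, by simp⟩

/-- Expected utility of the lottery `y` under the vN-M utility function `u`. -/
def expUtil (u : Z → ℝ) (y : Lottery Z) : ℝ := ∑ z, y.1 z * u z

variable {I : Type} [DecidableEq I] {S : I → Type}

/-- `s_i` is strictly dominated (for agent `i`, at cardinal state `u`, in the mechanism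
with outcome function `g`) on the product set `×_j T j`. -/
def Dominated (u : I → Z → ℝ) (g : (∀ i, S i) → Lottery Z)
    (T : ∀ j, Set (S j)) (i : I) (si : S i) : Prop :=
  ∃ si' : S i, ∀ s : ∀ j, S j, (∀ j, j ≠ i → s j ∈ T j) →
    expUtil (u i) (g (update s i si)) < expUtil (u i) (g (update s i si'))

/-- `UDk u g k i` is the set of strategies of agent `i` surviving `k` rounds of iterative
deletion of strictly dominated strategies at the cardinal state `u` (`UDk u g 0 i = S i`). -/
def UDk (u : I → Z → ℝ) (g : (∀ i, S i) → Lottery Z) : ℕ → ∀ i, Set (S i)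
  | 0 => fun _ => Set.univ
  | (k + 1) => fun i => {si ∈ UDk u g k i | ¬ Dominated u g (UDk u g k) i si}

/-- `UD(M,u)`: profiles surviving one round of deletion. -/
def UDoneSet (u : I → Z → ℝ) (g : (∀ i, S i) → Lottery Z) : Set (∀ i, S i) :=
  {s | ∀ i, s i ∈ UDk u g 1 i}

/-- `UD^∞(M,u)`: profiles surviving iterative deletion (all rounds `k ≥ 1`). -/
def UDinfSet (u : I → Z → ℝ) (g : (∀ i, S i) → Lottery Z) : Set (∀ i, S i) :=
  {s | ∀ i, ∀ k : ℕ, s i ∈ UDk u g (k + 1) i}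

/-- `S_i^z`: strategies of agent `i` from which the degenerate outcome `z` is reachable. -/
def Sz [DecidableEq Z] (g : (∀ i, S i) → Lottery Z) (i : I) (z : Z) : Set (S i) :=
  {si | ∃ s : ∀ j, S j, s i = si ∧ g s = Lottery.delta z}

/-- `×_j T j` satisfies the non-domination property at `u`. -/
def NonDomProp (u : I → Z → ℝ) (g : (∀ i, S i) → Lottery Z) (T : ∀ j, Set (S j)) : Prop :=
  ∀ i, ∀ si ∈ T i, ∀ si' : S i, ∃ s : ∀ j, S j, (∀ j, j ≠ i → s j ∈ T j) ∧
    expUtil (u i) (g (update s i si')) ≤ expUtil (u i) (g (update s i si))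

/-- `u` is a cardinal representation of the ordinal state `θ`. -/
def Represents (u : I → Z → ℝ) (θ : I → Z → Z → Prop) : Prop :=
  ∀ i z z', θ i z z' ↔ u i z' ≤ u i z

/-- `Θ*`: all ordinal states (complete and transitive preference profiles). -/
def ThetaStar (I Z : Type) : Set (I → Z → Z → Prop) :=
  {θ | ∀ i, (∀ z z', θ i z z' ∨ θ i z' z) ∧ Transitive (θ i)}

/-- `Θ^una`: ordinal states where all agents have identical preferences. -/
def ThetaUna (I Z : Type) : Set (I → Z → Z → Prop) :=
  {θ ∈ ThetaStar I Z | ∀ i j z z', θ i z z' ↔ θ j z z'}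

/-- `Θ^strict`: ordinal states where no agent has non-trivial indifference. -/
def ThetaStrict (I Z : Type) : Set (I → Z → Z → Prop) :=
  {θ ∈ ThetaStar I Z | ∀ i z z', θ i z z' → θ i z' z → z = z'}

/-- The strict part `≻_i^θ`. -/
def StrictPref (θ : I → Z → Z → Prop) (i : I) (z z' : Z) : Prop := θ i z z' ∧ ¬ θ i z' z

/-- Agent `i` is a dictator for `f` on `Θ`. -/
def Dictator (Θ : Set (I → Z → Z → Prop)) (f : (I → Z → Z → Prop) → Z) (i : I) : Prop :=
  ∀ θ ∈ Θ, ∀ z, z ≠ f θ → StrictPref θ i (f θ) z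

/-- `(Θ, Ω)` form a cardinal implementation problem: `Θ` is a set of ordinal states, every
member of `Ω` is a cardinal representation of some `θ ∈ Θ`, and `Ω_θ ≠ ∅` for all `θ ∈ Θ`. -/
def CIProblem (Θ : Set (I → Z → Z → Prop)) (Ω : Set (I → Z → ℝ)) : Prop :=
  Θ ⊆ ThetaStar I Z ∧ (∀ u ∈ Ω, ∃ θ ∈ Θ, Represents u θ) ∧
    ∀ θ ∈ Θ, ∃ u ∈ Ω, Represents u θ

/-- `f` is UD-implemented by the mechanism with outcome function `g`. -/
def UDImplements [DecidableEq Z] (Θ : Set (I → Z → Z → Prop)) (Ω : Set (I → Z → ℝ))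
    (f : (I → Z → Z → Prop) → Z) (g : (∀ i, S i) → Lottery Z) : Prop :=
  ∀ θ ∈ Θ, ∀ u ∈ Ω, Represents u θ → g '' UDoneSet u g = {Lottery.delta (f θ)}

/-- `f` is UD^∞-implemented by the mechanism with outcome function `g`. -/
def UDinfImplements [DecidableEq Z] (Θ : Set (I → Z → Z → Prop)) (Ω : Set (I → Z → ℝ))
    (f : (I → Z → Z → Prop) → Z) (g : (∀ i, S i) → Lottery Z) : Prop :=
  ∀ θ ∈ Θ, ∀ u ∈ Ω, Represents u θ → g '' UDinfSet u g = {Lottery.delta (f θ)}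

/-- `Θ^{(i1,i2)-z}`: strict states where `z` is second-best for both `i1` and `i2`,
whose top-ranked outcomes differ. -/
def ThetaSecond [Fintype Z] (i1 i2 : I) (z : Z) : Set (I → Z → Z → Prop) :=
  {θ ∈ ThetaStrict I Z |
    Set.ncard {z' | θ i1 z z'} = Fintype.card Z - 1 ∧
    Set.ncard {z' | θ i2 z z'} = Fintype.card Z - 1 ∧
    {z' | θ i1 z z'} ≠ {z' | θ i2 z z'}}

end
/-- If `z` is a weakly top-ranked outcome of every agent at the cardinal state `u`, then
`S_i^z ⊆ UD_i^k(M,u)` for every agent `i` and every round `k ≥ 1`; in particular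
`×_i S_i^z ⊆ UD^∞(M,u)`. -/
theorem Sz_subset_UDk_of_top
    {I Z : Type} [Fintype I] [Fintype Z] [DecidableEq I] [DecidableEq Z]
    (hI : 2 ≤ Fintype.card I) (hZ : 2 ≤ Fintype.card Z)
    (S : I → Type) (hfin : ∀ i, Finite (S i)) (hne : ∀ i, Nonempty (S i))
    (g : (∀ i, S i) → Lottery Z) (u : I → Z → ℝ) (z : Z)
    (htop : ∀ (i : I) (z' : Z), u i z' ≤ u i z) :
    (∀ (i : I) (k : ℕ), 1 ≤ k → Sz g i z ⊆ UDk u g k i) ∧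
      {s : ∀ i, S i | ∀ i, s i ∈ Sz g i z} ⊆ UDinfSet u g := by
  -- Expected utility is at most `u i z` for any lottery, and equals `u i z` at `delta z`.
  have hle : ∀ (i : I) (y : Lottery Z), expUtil (u i) y ≤ u i z := by
    intro i y
    have : expUtil (u i) y ≤ ∑ z', y.1 z' * u i z := by
      apply Finset.sum_le_sum
      intro z' _
      exact mul_le_mul_of_nonneg_left (htop i z') (y.2.1 z')
    calc expUtil (u i) y ≤ ∑ z', y.1 z' * u i z := this
      _ = (∑ z', y.1 z') * u i z := by rw [Finset.sum_mul]
      _ = u i z := by rw [y.2.2, one_mul]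
  have hdelta : ∀ i : I, expUtil (u i) (Lottery.delta z) = u i z := by
    intro i
    simp [expUtil, Lottery.delta]
  -- key induction
  have key : ∀ (k : ℕ) (i : I), Sz g i z ⊆ UDk u g k i := by
    intro k
    induction k with
    | zero => intro i _ _; trivial
    | succ k ih =>
      intro i si hsi
      obtain ⟨s, hsi', hgs⟩ := hsi
      refine ⟨ih i ⟨s, hsi', hgs⟩, ?_⟩
      rintro ⟨si', hdom⟩
      have hmem : ∀ j, j ≠ i → s j ∈ UDk u g k j := by
        intro j _
        exact ih j ⟨s, rfl, hgs⟩
      have := hdom s hmem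
      have heq : update s i si = s := by rw [← hsi']; exact Function.update_eq_self i s
      rw [heq, hgs, hdelta] at this
      exact absurd this (not_lt.mpr (hle i _))
  constructor
  · intro i k _
    exact key k i
  · intro s hs i k
    exact key (k + 1) i (hs i)
end

section
/- Suppose |Z| = 2. Let (Θ, Ω, f : Θ → Z) be a cardinal implementation problem and suppose f is UD^∞-implemented by a stochastic finite-action mechanism M = ⟨S, g⟩. If θ ∈ Θ and i ∈ I are such that the outcome z″ distinct from f(θ) satisfies z″ ≻_i^θ f(θ) (so f(θ) is agent i's unique worst outcome at θ), then S_i^{f(θ)} = S_i. -/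
open Function

/-- Suppose `|Z| = 2`. If `f` is UD^∞-implemented by `⟨S, g⟩`, `θ ∈ Θ`, and `f(θ)` is agent
`i`'s unique worst outcome at `θ` (the other outcome is strictly preferred), then
`S_i^{f(θ)} = S_i`. -/
theorem Sz_of_worst_outcome_eq_univ
    {I Z : Type} [Fintype I] [Fintype Z] [DecidableEq I] [DecidableEq Z]
    (hI : 2 ≤ Fintype.card I) (hZ : Fintype.card Z = 2)
    (Θ : Set (I → Z → Z → Prop)) (Ω : Set (I → Z → ℝ)) (f : (I → Z → Z → Prop) → Z)
    (hCIP : CIProblem Θ Ω)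
    (S : I → Type) (hfin : ∀ i, Finite (S i)) (hne : ∀ i, Nonempty (S i))
    (g : (∀ i, S i) → Lottery Z) (himp : UDinfImplements Θ Ω f g)
    (θ : I → Z → Z → Prop) (hθ : θ ∈ Θ) (i : I)
    (hworst : ∀ z'' : Z, z'' ≠ f θ → StrictPref θ i z'' (f θ)) :
    Sz g i (f θ) = (Set.univ : Set (S i)) := by
  classical
  by_contra hcon
  rw [Set.eq_univ_iff_forall] at hcon
  push_neg at hcon
  obtain ⟨si, hsi⟩ := hcon
  obtain ⟨hΘsub, hΩ, hrep⟩ := hCIP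
  obtain ⟨u, hu, hurep⟩ := hrep θ hθ
  have himg := himp θ hθ u hu hurep
  have hδ : Lottery.delta (f θ) ∈ g '' UDinfSet u g := by
    rw [himg]; rfl
  obtain ⟨sstar, hsstar, hgs⟩ := hδ
  have hcomp : ∀ j k, sstar j ∈ UDk u g k j := by
    intro j k
    cases k with
    | zero => trivial
    | succ k => exact hsstar j k
  have : Finite (S i) := hfin i
  have : Nonempty (S i) := hne i
  set v : S i → ℝ := fun t => expUtil (u i) (g (update sstar i t)) with hv
  obtain ⟨tstar, htmax⟩ := Finite.exists_max v
  have htk : ∀ k, tstar ∈ UDk u g k i := by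
    intro k
    induction k with
    | zero => trivial
    | succ k ih =>
      refine ⟨ih, ?_⟩
      rintro ⟨t', ht'⟩
      have hlt := ht' sstar (fun j _ => hcomp j k)
      exact absurd (htmax t') (not_le.mpr hlt)
  have hin : update sstar i tstar ∈ UDinfSet u g := by
    intro j k
    by_cases hji : j = i
    · subst hji; rw [update_self]; exact htk (k + 1)
    · rw [update_of_ne hji]; exact hsstar j k
  have hgt : g (update sstar i tstar) = Lottery.delta (f θ) := by
    have hmem : g (update sstar i tstar) ∈ g '' UDinfSet u g := ⟨_, hin, rfl⟩
    rw [himg] at hmem; exact hmem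
  have hu_lt : ∀ z, z ≠ f θ → u i (f θ) < u i z := by
    intro z hz
    obtain ⟨h1, h2⟩ := hworst z hz
    have hle := (hurep i z (f θ)).mp h1
    have h2' : ¬ u i z ≤ u i (f θ) := fun h => h2 ((hurep i (f θ) z).mpr h)
    exact lt_of_le_of_ne hle (fun h => h2' (le_of_eq h.symm))
  have hEδ : expUtil (u i) (Lottery.delta (f θ)) = u i (f θ) := by
    simp [expUtil, Lottery.delta, ite_mul]
  have hne' : g (update sstar i si) ≠ Lottery.delta (f θ) := by
    intro h
    exact hsi ⟨update sstar i si, update_self i si sstar, h⟩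
  set y := g (update sstar i si) with hy
  have hpos : ∃ z1, z1 ≠ f θ ∧ 0 < y.1 z1 := by
    by_contra h
    push_neg at h
    have hz0 : ∀ z, z ≠ f θ → y.1 z = 0 := fun z hz => le_antisymm (h z hz) (y.2.1 z)
    apply hne'
    apply Subtype.ext; funext z
    by_cases hzz : z = f θ
    · subst hzz
      have hsum : ∑ z, y.1 z = y.1 (f θ) :=
        Finset.sum_eq_single _ (fun b _ hb => hz0 b hb) (by simp)
      have h1 : y.1 (f θ) = 1 := by rw [← hsum]; exact y.2.2
      simp [Lottery.delta, h1]
    · simp [Lottery.delta, hzz, hz0 z hzz]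
  obtain ⟨z1, hz1, hz1pos⟩ := hpos
  have h1 : ∑ z, y.1 z * u i (f θ) = u i (f θ) := by
    rw [← Finset.sum_mul, y.2.2, one_mul]
  have h2 : ∑ z, y.1 z * u i (f θ) < ∑ z, y.1 z * u i z := by
    apply Finset.sum_lt_sum
    · intro z _
      rcases eq_or_ne z (f θ) with rfl | h
      · exact le_refl _
      · exact mul_le_mul_of_nonneg_left (le_of_lt (hu_lt z h)) (y.2.1 z)
    · exact ⟨z1, Finset.mem_univ _, mul_lt_mul_of_pos_left (hu_lt z1 hz1) hz1pos⟩
  have hvlt : u i (f θ) < v si := by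
    have : v si = ∑ z, y.1 z * u i z := rfl
    rw [this]; rw [h1] at h2; exact h2
  have hvt : v tstar = u i (f θ) := by
    have : v tstar = expUtil (u i) (g (update sstar i tstar)) := rfl
    rw [this, hgt, hEδ]
  have := htmax si
  rw [hvt] at this
  exact absurd this (not_le.mpr hvlt)
end
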